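/- Let n ≥ 2 and let z : Fin n → ℂ be admissible with Δ(z) = Δmax(n) (a maximizer). Then the diameter graph of z, i.e. the simple graph G on Fin n in which i is adjacent to j if and only if i ≠ j and dist (z i) (z j) = 2, is connected. -/

import Mathlib

/-- The product over all ordered pairs `(i,j)` with `i ≠ j` of `dist (z i) (z j)`. -/
noncomputable def Delta (n : ℕ) (z : Fin n → ℂ) : ℝ :=
  ∏ p ∈ Finset.univ.filter (fun p : Fin n × Fin n => p.1 ≠ p.2), dist (z p.1) (z p.2)

/-- `z` is admissible if all pairwise distances are at most 2. -/
def Admissible (n : ℕ) (z : Fin n → ℂ) : Prop :=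
  ∀ i j, dist (z i) (z j) ≤ 2

/-- The maximal discriminant over admissible configurations. -/
noncomputable def Dmax (n : ℕ) : ℝ :=
  sSup {d : ℝ | ∃ z : Fin n → ℂ, Admissible n z ∧ Delta n z = d}

/-- The diameter graph of a configuration: `i` adjacent to `j` iff `i ≠ j` and
`dist (z i) (z j) = 2`. -/
def diamGraph (n : ℕ) (z : Fin n → ℂ) : SimpleGraph (Fin n) where
  Adj i j := i ≠ j ∧ dist (z i) (z j) = 2
  symm := ⟨fun i j h => ⟨h.1.symm, by rw [dist_comm]; exact h.2⟩⟩
  loopless := ⟨fun i h => h.1 rfl⟩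

/-!
If the diameter graph of a maximizer `z` were disconnected, move one of its components rigidly
by a small `t ∈ ℂ`. Pairs at distance exactly `2` stay inside a component and keep their
distance, while all other distances are `< 2`, so the moved configuration is still admissible.
Along the motion `Δ` is the modulus of an entire function of `t` with a local maximum at
`t = 0`; by the maximum modulus principle and the identity theorem it is constant. But it
vanishes at the `t` that moves a point of the component onto a point outside it, whereas
`Δ(z) = Δmax(n) > 0`.
-/

open Filter Topology

theorem Differentiable.apply_eq_of_isLocalMax_norm {E : Type*} [NormedAddCommGroup E]
    [NormedSpace ℂ E] [StrictConvexSpace ℝ E] [CompleteSpace E] {f : ℂ → E}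
    (hf : Differentiable ℂ f) {c : ℂ} (hc : IsLocalMax (fun t => ‖f t‖) c) (t : ℂ) : f t = f c :=
  congrFun ((Complex.analyticOnNhd_univ_iff_differentiable.2 hf).eq_of_eventuallyEq
    analyticOnNhd_const (Complex.eventually_eq_of_isLocalMax_norm
      (Eventually.of_forall fun z => hf z) hc)) t

section Discriminant

variable {n : ℕ}

theorem Delta_eq_norm_prod (w : Fin n → ℂ) :
    Delta n w = ‖∏ p ∈ Finset.univ.filter (fun p : Fin n × Fin n => p.1 ≠ p.2),
      (w p.1 - w p.2)‖ := by
  simp only [Delta, norm_prod, dist_eq_norm]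

theorem Delta_eq_zero_of_apply_eq {w : Fin n → ℂ} {i j : Fin n} (hij : i ≠ j)
    (h : w i = w j) : Delta n w = 0 :=
  Finset.prod_eq_zero (i := (i, j)) (by simpa using hij) (by simp [h])

theorem Delta_pos_of_injective {w : Fin n → ℂ} (hw : Function.Injective w) : 0 < Delta n w :=
  Finset.prod_pos fun _ hp => dist_pos.2 (hw.ne (Finset.mem_filter.1 hp).2)

variable (n) in
theorem bddAbove_Delta :
    BddAbove {d : ℝ | ∃ z : Fin n → ℂ, Admissible n z ∧ Delta n z = d} := by
  refine ⟨2 ^ (Finset.univ.filter (fun p : Fin n × Fin n => p.1 ≠ p.2)).card, ?_⟩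
  rintro d ⟨w, hw, rfl⟩
  calc Delta n w ≤ ∏ _p ∈ Finset.univ.filter (fun p : Fin n × Fin n => p.1 ≠ p.2), (2 : ℝ) :=
        Finset.prod_le_prod (fun _ _ => dist_nonneg) fun _ _ => hw _ _
    _ = _ := Finset.prod_const _

theorem Delta_le_Dmax {w : Fin n → ℂ} (hw : Admissible n w) : Delta n w ≤ Dmax n :=
  le_csSup (bddAbove_Delta n) ⟨w, hw, rfl⟩

variable (n) in
theorem Dmax_pos : 0 < Dmax n := by
  set w : Fin n → ℂ := fun k => ((k / n : ℝ) : ℂ)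
  have hmem : ∀ k : Fin n, (k / n : ℝ) ∈ Set.Icc 0 1 := fun k =>
    ⟨by positivity, div_le_one_of_le₀ (by exact_mod_cast k.isLt.le) (Nat.cast_nonneg n)⟩
  have hadm : Admissible n w := fun a b => by
    simp only [w, Complex.isometry_ofReal.dist_eq]
    linarith [Real.dist_le_of_mem_Icc_01 (hmem a) (hmem b)]
  have hinj : Function.Injective w := fun a b hab => by
    have hn : (n : ℂ) ≠ 0 := by exact_mod_cast a.pos.ne'
    simpa [w, div_left_inj' hn, Fin.val_inj] using hab
  exact (Delta_pos_of_injective hinj).trans_le (Delta_le_Dmax hadm)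

theorem eventually_admissible_add_smul {z e : Fin n → ℂ} (hz : Admissible n z)
    (he : ∀ i j, dist (z i) (z j) = 2 → e i = e j) :
    ∀ᶠ t in 𝓝 (0 : ℂ), Admissible n (z + t • e) := by
  refine eventually_all.2 fun i => eventually_all.2 fun j => ?_
  by_cases hij : dist (z i) (z j) = 2
  · refine Eventually.of_forall fun t => ?_
    simp only [Pi.add_apply, Pi.smul_apply, he i j hij, dist_add_right]
    exact hz i j
  · have hcont : Continuous fun t : ℂ => dist ((z + t • e) i) ((z + t • e) j) := by fun_prop
    have hlt : dist ((z + (0 : ℂ) • e) i) ((z + (0 : ℂ) • e) j) < 2 := by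
      simpa using (hz i j).lt_of_ne hij
    exact (hcont.continuousAt.eventually_lt continuousAt_const hlt).mono fun _ => le_of_lt

theorem apply_eq_of_Delta_eq_Dmax {z e : Fin n → ℂ} (hz : Admissible n z)
    (hmax : Delta n z = Dmax n) (he : ∀ i j, dist (z i) (z j) = 2 → e i = e j) (i j : Fin n) :
    e i = e j := by
  by_contra hne
  set f : ℂ → ℂ := fun t => ∏ p ∈ Finset.univ.filter (fun p : Fin n × Fin n => p.1 ≠ p.2),
    ((z + t • e) p.1 - (z + t • e) p.2)
  have hf : ∀ t, ‖f t‖ = Delta n (z + t • e) := fun t => (Delta_eq_norm_prod _).symm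
  have hloc : IsLocalMax (fun t => ‖f t‖) 0 := by
    filter_upwards [eventually_admissible_add_smul hz he] with t ht
    simpa [hf, hmax] using Delta_le_Dmax ht
  have hconst := Differentiable.apply_eq_of_isLocalMax_norm (by fun_prop) hloc
  set t₀ := (z j - z i) / (e i - e j)
  have hcollide : (z + t₀ • e) i = (z + t₀ • e) j := by
    simp only [Pi.add_apply, Pi.smul_apply, smul_eq_mul, t₀]
    field_simp [sub_ne_zero.2 hne]
    ring
  have hzero : Delta n (z + t₀ • e) = 0 :=
    Delta_eq_zero_of_apply_eq (fun h => hne (congrArg e h)) hcollide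
  have hzero' : Delta n z = 0 :=
    calc Delta n z = ‖f 0‖ := by simp [hf]
      _ = ‖f t₀‖ := by rw [hconst t₀]
      _ = 0 := by rw [hf, hzero]
  exact (Dmax_pos n).ne' (hmax ▸ hzero')

end Discriminant

theorem stmt5 (n : ℕ) (hn : 2 ≤ n) (z : Fin n → ℂ)
    (hadm : Admissible n z) (hmax : Delta n z = Dmax n) :
    (diamGraph n z).Connected := by
  classical
  set G := diamGraph n z
  let i : Fin n := ⟨0, by omega⟩
  refine G.connected_iff_exists_forall_reachable.2 ⟨i, fun j => ?_⟩
  have hrigid := apply_eq_of_Delta_eq_Dmax (e := fun v => if G.Reachable i v then (1 : ℂ) else 0)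
    hadm hmax ?_ i j
  · simpa using hrigid
  intro u v huv
  rcases eq_or_ne u v with rfl | hne
  · rfl
  have hadj : G.Adj u v := ⟨hne, huv⟩
  have hiff : G.Reachable i u ↔ G.Reachable i v :=
    ⟨fun h => h.trans hadj.reachable, fun h => h.trans hadj.reachable.symm⟩
  simp only [hiff]
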